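/- arXiv:1309.0888 — 3 statements merged into one kernel-verified Lean document; each statement's English description precedes it below -/
import Mathlib

section
/- Let n ≥ 2 be an integer and let H_{3n} = G_{3n} □ K_3 be the Cartesian product of G_{3n} and the complete graph K_3. Then the (2n)th power H_{3n}^{2n} is isomorphic to the lexicographic product K_{3^{3n−2}}[K_3 □ K_3] of the complete graph on 3^{3n−2} vertices with the graph K_3 □ K_3. -/
open SimpleGraph

/-- The `k`th power of a graph `G`: two distinct vertices are adjacent iff their
distance in `G` is (finite and) at most `k`. -/
def SimpleGraph.power {V : Type*} (G : SimpleGraph V) (k : ℕ) : SimpleGraph V where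
  Adj u v := u ≠ v ∧ G.Reachable u v ∧ G.dist u v ≤ k
  symm := by
    constructor
    rintro u v ⟨h1, h2, h3⟩
    exact ⟨h1.symm, h2.symm, by rwa [SimpleGraph.dist_comm]⟩
  loopless := by
    constructor
    rintro v ⟨h1, -, -⟩
    exact h1 rfl

/-- `G` admits a proper coloring from the lists `L`. -/
def SimpleGraph.Choosable {V : Type*} (G : SimpleGraph V) (L : V → Finset ℕ) : Prop :=
  ∃ φ : V → ℕ, (∀ v, φ v ∈ L v) ∧ ∀ u v, G.Adj u v → φ u ≠ φ v

/-- The list chromatic number of `G`: the least `t` such that `G` is colorable from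
any assignment of lists of size at least `t`. -/
noncomputable def SimpleGraph.listChromaticNumber {V : Type*} (G : SimpleGraph V) : ℕ :=
  sInf {t : ℕ | ∀ L : V → Finset ℕ, (∀ v, t ≤ (L v).card) → G.Choosable L}

/-- The lexicographic product of two graphs. -/
def SimpleGraph.lexProd {V W : Type*} (G : SimpleGraph V) (H : SimpleGraph W) :
    SimpleGraph (V × W) where
  Adj a b := G.Adj a.1 b.1 ∨ (a.1 = b.1 ∧ H.Adj a.2 b.2)
  symm := by
    constructor
    rintro a b (h | ⟨h1, h2⟩)
    · exact Or.inl h.symm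
    · exact Or.inr ⟨h1.symm, h2.symm⟩
  loopless := by
    constructor
    rintro a (h | ⟨-, h2⟩)
    · exact G.irrefl h
    · exact H.irrefl h2

/-- Vertex set `Γ_m`: the vectors in `ℤ_3^m` whose coordinates sum to zero. -/
def GammaVert (m : ℕ) : Type := {z : Fin m → ZMod 3 // ∑ i, z i = 0}

/-- The generator `x_{i,j}`: `1` in coordinate `i`, `2` in coordinate `j`, `0` elsewhere. -/
def xvec (m : ℕ) (i j : Fin m) : Fin m → ZMod 3 :=
  fun l => if l = i then 1 else if l = j then 2 else 0

/-- The Cayley graph `G_m` on `Γ_m` with connection set `X_m = {x_{i,j} : i ≠ j}`. -/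
def Gm (m : ℕ) : SimpleGraph (GammaVert m) where
  Adj y z := ∃ i j : Fin m, i ≠ j ∧ y.1 - z.1 = xvec m i j
  symm := by
    constructor
    rintro y z ⟨i, j, hij, h⟩
    refine ⟨j, i, hij.symm, ?_⟩
    have h' : z.1 - y.1 = -(y.1 - z.1) := by ring
    rw [h', h]
    funext l
    simp only [xvec, Pi.neg_apply]
    by_cases h1 : l = i
    · subst h1
      simp only [if_pos rfl, if_neg hij]
      decide
    · by_cases h2 : l = j
      · subst h2
        simp only [if_pos rfl, if_neg h1]
        decide
      · simp only [if_neg h1, if_neg h2]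
        decide
  loopless := by
    constructor
    rintro y ⟨i, j, hij, h⟩
    have := congrFun h i
    simp [xvec] at this

/-!
For `d ∈ ℤ₃^m` let `w(d) = max (∑ val dₗ) (∑ val (-dₗ))`, where `val : ℤ₃ → {0, 1, 2}`.
Each generator `x_{i,j}` has `w = 3` and `w` is subadditive, while every nonzero sum-zero `d`
has a generator lowering `w` by exactly `3`; hence the distance from `y` to `z` in `G_m` is
`⌊w(y - z) / 3⌋`. For `m = 3n` we have `w ≤ 6n`, with equality exactly when `y - z` is a nonzero
constant vector. As distances add up in a box product, two distinct vertices `(y, a), (z, b)` of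
`H_{3n}` are at distance more than `2n` iff `y - z` is a nonzero constant and `a ≠ b`.
Translating by constants to make the first coordinate `0` splits `Γ_{3n}` as `B × ℤ₃` with
`|B| = 3^{3n-2}`, and this non-adjacency relation becomes that of `K_{|B|}[K₃ □ K₃]`.
-/

namespace SimpleGraph

variable {V : Type*} {G : SimpleGraph V}

theorem power_adj_iff {k : ℕ} {u v : V} :
    (G.power k).Adj u v ↔ u ≠ v ∧ G.edist u v ≤ k := by
  refine and_congr_right fun _ => ⟨fun ⟨hr, hd⟩ => ?_, fun h => ?_⟩
  · rw [← hr.coe_dist_eq_edist]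
    exact_mod_cast hd
  · have hr : G.Reachable u v := edist_ne_top_iff_reachable.mp (ne_top_of_le_ne_top (by simp) h)
    rw [← hr.coe_dist_eq_edist] at h
    exact ⟨hr, by exact_mod_cast h⟩

theorem Walk.le_add_length_of_le_add_one (φ : V → ℕ) (hφ : ∀ u v, G.Adj u v → φ u ≤ φ v + 1)
    {u v : V} (p : G.Walk u v) : φ u ≤ φ v + p.length := by
  induction p with
  | nil => simp
  | cons h p ih =>
    have := hφ _ _ h
    rw [Walk.length_cons]
    omega

theorem exists_walk_length_le_of_descent (φ : V → ℕ) {t : V}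
    (hφ : ∀ u, u ≠ t → ∃ v, G.Adj u v ∧ φ v < φ u) (u : V) :
    ∃ p : G.Walk u t, p.length ≤ φ u := by
  induction hk : φ u using Nat.strong_induction_on generalizing u with
  | _ k ih =>
    by_cases hu : u = t
    · subst hu
      exact ⟨Walk.nil, by simp⟩
    obtain ⟨v, hadj, hlt⟩ := hφ u hu
    obtain ⟨p, hp⟩ := ih (φ v) (hk ▸ hlt) v rfl
    exact ⟨Walk.cons hadj p, by rw [Walk.length_cons]; omega⟩

theorem edist_eq_of_potential (φ : V → ℕ) {t : V} (ht : φ t = 0)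
    (hle : ∀ u v, G.Adj u v → φ u ≤ φ v + 1)
    (hdesc : ∀ u, u ≠ t → ∃ v, G.Adj u v ∧ φ v < φ u) (u : V) :
    G.edist u t = φ u := by
  obtain ⟨p, hp⟩ := exists_walk_length_le_of_descent φ hdesc u
  obtain ⟨q, hq⟩ := exists_walk_of_edist_ne_top (edist_ne_top_iff_reachable.mpr ⟨p⟩)
  have hlow := q.le_add_length_of_le_add_one φ hle
  refine le_antisymm ((edist_le p).trans (by exact_mod_cast hp)) ?_
  rw [← hq]
  exact_mod_cast (by omega : φ u ≤ q.length)

theorem lexProd_top_boxProd_top_adj {Q P C : Type*} {x y : Q × P × C} :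
    ((⊤ : SimpleGraph Q).lexProd ((⊤ : SimpleGraph P).boxProd (⊤ : SimpleGraph C))).Adj x y ↔
      x ≠ y ∧ ¬(x.1 = y.1 ∧ x.2.1 ≠ y.2.1 ∧ x.2.2 ≠ y.2.2) := by
  obtain ⟨q, p, c⟩ := x
  obtain ⟨q', p', c'⟩ := y
  simp only [lexProd, boxProd_adj, top_adj, ne_eq, Prod.mk.injEq]
  tauto

theorem nonempty_iso_lexProd_top_boxProd_top {W Q P C : Type*} {G : SimpleGraph (W × C)}
    (e : W ≃ Q × P)
    (hG : ∀ u v, G.Adj u v ↔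
      u ≠ v ∧ ¬((e u.1).1 = (e v.1).1 ∧ (e u.1).2 ≠ (e v.1).2 ∧ u.2 ≠ v.2)) :
    Nonempty (G ≃g (⊤ : SimpleGraph Q).lexProd ((⊤ : SimpleGraph P).boxProd (⊤ : SimpleGraph C))) :=
  ⟨{ toEquiv := (e.prodCongr (Equiv.refl C)).trans (Equiv.prodAssoc Q P C)
     map_rel_iff' := by
       rintro ⟨v, a⟩ ⟨w, b⟩
       have he : (e v).1 = (e w).1 ∧ (e v).2 = (e w).2 ↔ v = w := by
         rw [← Prod.ext_iff, e.apply_eq_iff_eq]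
       simp only [lexProd_top_boxProd_top_adj, hG, Equiv.trans_apply, Equiv.prodCongr_apply,
         Equiv.refl_apply, Prod.map_apply, Equiv.prodAssoc_apply, ne_eq, Prod.mk.injEq]
       tauto }⟩

end SimpleGraph

theorem Fintype.sum_add_eq_sum_add_of_eq_off_pair {ι M : Type*} [Fintype ι] [DecidableEq ι]
    [AddCommMonoid M] {f g : ι → M} {i j : ι} (hij : i ≠ j)
    (h : ∀ l, l ≠ i → l ≠ j → g l = f l) :
    ∑ l, g l + (f i + f j) = ∑ l, f l + (g i + g j) := by
  have split : ∀ φ : ι → M, ∑ l, φ l = ∑ l ∈ Finset.univ \ {i, j}, φ l + (φ i + φ j) :=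
    fun φ => by rw [← Finset.sum_pair hij, Finset.sum_sdiff (Finset.subset_univ _)]
  have off : ∑ l ∈ Finset.univ \ {i, j}, g l = ∑ l ∈ Finset.univ \ {i, j}, f l :=
    Finset.sum_congr rfl fun l hl => by
      simp only [Finset.mem_sdiff, Finset.mem_insert, Finset.mem_singleton, not_or] at hl
      exact h l hl.2.1 hl.2.2
  rw [split f, split g, off]
  abel

section xvec

variable {m : ℕ} {i j : Fin m}

theorem xvec_apply_left : xvec m i j i = 1 := if_pos rfl

theorem xvec_apply_right (hij : i ≠ j) : xvec m i j j = 2 := by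
  simp [xvec, hij.symm]

theorem xvec_apply_of_ne {l : Fin m} (hi : l ≠ i) (hj : l ≠ j) : xvec m i j l = 0 := by
  simp [xvec, hi, hj]

theorem sum_xvec (hij : i ≠ j) : ∑ l, xvec m i j l = 0 := by
  have h := Fintype.sum_add_eq_sum_add_of_eq_off_pair (f := 0) hij
    fun l hi hj => xvec_apply_of_ne (m := m) hi hj
  rw [xvec_apply_left, xvec_apply_right hij] at h
  simp only [Pi.zero_apply, add_zero, Finset.sum_const_zero, zero_add] at h
  exact h.trans (by decide)

end xvec

namespace Ternary

variable {m : ℕ}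

def weight (d : Fin m → ZMod 3) : ℕ := ∑ l, (d l).val

def maxWeight (d : Fin m → ZMod 3) : ℕ := max (weight d) (weight (-d))

theorem weight_add_le (d e : Fin m → ZMod 3) : weight (d + e) ≤ weight d + weight e := by
  rw [weight, weight, weight, ← Finset.sum_add_distrib]
  exact Finset.sum_le_sum fun l _ => ZMod.val_add_le _ _

theorem maxWeight_add_le (d e : Fin m → ZMod 3) :
    maxWeight (d + e) ≤ maxWeight d + maxWeight e := by
  have h₁ := weight_add_le d e
  have h₂ := weight_add_le (-d) (-e)
  rw [maxWeight, maxWeight, maxWeight, neg_add]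
  omega

@[simp]
theorem maxWeight_zero : maxWeight (0 : Fin m → ZMod 3) = 0 := by
  simp [maxWeight, weight]

theorem weight_le (d : Fin m → ZMod 3) : weight d ≤ 2 * m := by
  calc weight d ≤ ∑ _l : Fin m, 2 := Finset.sum_le_sum fun l _ => Nat.le_of_lt_succ (d l).val_lt
    _ = 2 * m := by simp [mul_comm]

theorem maxWeight_le (d : Fin m → ZMod 3) : maxWeight d ≤ 2 * m :=
  max_le (weight_le d) (weight_le (-d))

theorem weight_eq_iff (d : Fin m → ZMod 3) : weight d = 2 * m ↔ d = fun _ => 2 := by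
  have h := Finset.sum_eq_sum_iff_of_le (s := Finset.univ) (f := fun l => (d l).val)
    (g := fun _ => 2) fun l _ => Nat.le_of_lt_succ (d l).val_lt
  simp only [Finset.sum_const, Finset.card_univ, Fintype.card_fin, smul_eq_mul,
    Finset.mem_univ, forall_const] at h
  rw [weight, mul_comm, h, funext_iff]
  exact forall_congr' fun l => (ZMod.val_injective 3).eq_iff' rfl

theorem maxWeight_eq_iff (d : Fin m → ZMod 3) :
    maxWeight d = 2 * m ↔ ∃ c : ZMod 3, c ≠ 0 ∧ d = fun _ => c := by
  have hneg : -d = (fun _ => 2) ↔ d = fun _ => 1 := by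
    rw [neg_eq_iff_eq_neg]; exact Iff.rfl
  have h₁ := weight_le d
  have h₂ := weight_le (-d)
  have hmax : maxWeight d = 2 * m ↔ weight d = 2 * m ∨ weight (-d) = 2 * m := by
    rw [maxWeight]; omega
  rw [hmax, weight_eq_iff, weight_eq_iff, hneg]
  constructor
  · rintro (h | h)
    · exact ⟨2, by decide, h⟩
    · exact ⟨1, by decide, h⟩
  · rintro ⟨c, hc, rfl⟩
    fin_cases c
    · exact absurd rfl hc
    · exact Or.inr rfl
    · exact Or.inl rfl

theorem three_dvd_weight {d : Fin m → ZMod 3} (hd : ∑ l, d l = 0) : 3 ∣ weight d := by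
  rw [← ZMod.natCast_eq_zero_iff, weight, Nat.cast_sum]
  simpa using hd

theorem weight_add_eq_of_eq_off_pair (d : Fin m → ZMod 3) {e : Fin m → ZMod 3} {i j : Fin m}
    (hij : i ≠ j) (he : ∀ l, l ≠ i → l ≠ j → e l = 0) :
    weight (d + e) + ((d i).val + (d j).val) = weight d + ((d i + e i).val + (d j + e j).val) :=
  Fintype.sum_add_eq_sum_add_of_eq_off_pair (f := fun l => (d l).val)
    (g := fun l => ((d + e) l).val) hij fun l hi hj => by simp [he l hi hj]

theorem weight_sub_xvec (d : Fin m → ZMod 3) {i j : Fin m} (hij : i ≠ j) :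
    weight (d - xvec m i j) + ((d i).val + (d j).val) =
      weight d + ((d i - 1).val + (d j - 2).val) := by
  have h := weight_add_eq_of_eq_off_pair d (e := -xvec m i j) hij
    fun l hi hj => by simp [xvec_apply_of_ne hi hj]
  simpa [← sub_eq_add_neg, xvec_apply_left, xvec_apply_right hij] using h

theorem weight_neg_sub_xvec (d : Fin m → ZMod 3) {i j : Fin m} (hij : i ≠ j) :
    weight (-(d - xvec m i j)) + ((-d i).val + (-d j).val) =
      weight (-d) + ((-d i + 1).val + (-d j + 2).val) := by
  have h := weight_add_eq_of_eq_off_pair (-d) hij fun l hi hj => xvec_apply_of_ne (m := m) hi hj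
  simpa [neg_sub, sub_eq_neg_add, xvec_apply_left, xvec_apply_right hij] using h

theorem maxWeight_xvec {i j : Fin m} (hij : i ≠ j) : maxWeight (xvec m i j) = 3 := by
  have h₁ := weight_sub_xvec 0 hij
  have h₂ := weight_neg_sub_xvec 0 hij
  simp only [zero_sub, neg_neg, Pi.zero_apply, neg_zero] at h₁ h₂
  change weight (-xvec m i j) + (0 + 0) = weight 0 + (2 + 1) at h₁
  change weight (xvec m i j) + (0 + 0) = weight 0 + (1 + 2) at h₂
  simp only [weight, Pi.zero_apply, ZMod.val_zero, Finset.sum_const_zero] at h₁ h₂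
  rw [maxWeight, weight, weight]
  omega

theorem exists_ne_ne_zero_of_three_dvd_weight {d : Fin m → ZMod 3} (h3 : 3 ∣ weight d)
    {i : Fin m} (hi : d i ≠ 0) : ∃ j, j ≠ i ∧ d j ≠ 0 := by
  by_contra! h
  have hw : weight d = (d i).val :=
    Finset.sum_eq_single i (fun l _ hl => by simp [h l hl]) (by simp)
  have hpos := (ZMod.val_ne_zero (d i)).mpr hi
  have hlt := (d i).val_lt
  omega

theorem weight_neg_eq_two_mul {d : Fin m → ZMod 3} (h : ∀ l, d l ≠ 2) :
    weight (-d) = 2 * weight d := by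
  rw [weight, weight, Finset.mul_sum]
  exact Finset.sum_congr rfl fun l _ =>
    (by decide : ∀ t : ZMod 3, t ≠ 2 → (-t).val = 2 * t.val) _ (h l)

theorem weight_eq_two_mul_weight_neg {d : Fin m → ZMod 3} (h : ∀ l, d l ≠ 1) :
    weight d = 2 * weight (-d) := by
  rw [weight, weight, Finset.mul_sum]
  exact Finset.sum_congr rfl fun l _ =>
    (by decide : ∀ t : ZMod 3, t ≠ 1 → t.val = 2 * (-t).val) _ (h l)

theorem maxWeight_sub_xvec_add_three_le_of_one_two {d : Fin m → ZMod 3} {i j : Fin m}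
    (hij : i ≠ j) (hi : d i = 1) (hj : d j = 2) : maxWeight (d - xvec m i j) + 3 ≤ maxWeight d := by
  have h₁ := weight_sub_xvec d hij
  have h₂ := weight_neg_sub_xvec d hij
  rw [hi, hj] at h₁ h₂
  change _ + (1 + 2) = _ + (0 + 0) at h₁
  change _ + (2 + 1) = _ + (0 + 0) at h₂
  rw [maxWeight, maxWeight]
  omega

theorem maxWeight_sub_xvec_add_three_le_of_one_one {d : Fin m → ZMod 3} (hsum : ∑ l, d l = 0)
    (hno2 : ∀ l, d l ≠ 2) {i j : Fin m} (hij : i ≠ j) (hi : d i = 1) (hj : d j = 1) :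
    maxWeight (d - xvec m i j) + 3 ≤ maxWeight d := by
  have h₁ := weight_sub_xvec d hij
  have h₂ := weight_neg_sub_xvec d hij
  rw [hi, hj] at h₁ h₂
  change _ + (1 + 1) = _ + (0 + 2) at h₁
  change _ + (2 + 2) = _ + (0 + 1) at h₂
  have h3 := three_dvd_weight hsum
  have hw := weight_neg_eq_two_mul hno2
  rw [maxWeight, maxWeight]
  omega

theorem maxWeight_sub_xvec_add_three_le_of_two_two {d : Fin m → ZMod 3} (hsum : ∑ l, d l = 0)
    (hno1 : ∀ l, d l ≠ 1) {i j : Fin m} (hij : i ≠ j) (hi : d i = 2) (hj : d j = 2) :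
    maxWeight (d - xvec m i j) + 3 ≤ maxWeight d := by
  have h₁ := weight_sub_xvec d hij
  have h₂ := weight_neg_sub_xvec d hij
  rw [hi, hj] at h₁ h₂
  change _ + (2 + 2) = _ + (1 + 0) at h₁
  change _ + (1 + 1) = _ + (2 + 0) at h₂
  have h3 := three_dvd_weight (d := -d) (by simp [hsum])
  have hw := weight_eq_two_mul_weight_neg hno1
  rw [maxWeight, maxWeight]
  omega

theorem exists_maxWeight_sub_xvec_add_three_le {d : Fin m → ZMod 3} (hd : d ≠ 0)
    (hsum : ∑ l, d l = 0) : ∃ i j, i ≠ j ∧ maxWeight (d - xvec m i j) + 3 ≤ maxWeight d := by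
  by_cases h12 : (∃ i, d i = 1) ∧ ∃ j, d j = 2
  · obtain ⟨⟨i, hi⟩, j, hj⟩ := h12
    have hij : i ≠ j := by rintro rfl; exact absurd (hi.symm.trans hj) (by decide)
    exact ⟨i, j, hij, maxWeight_sub_xvec_add_three_le_of_one_two hij hi hj⟩
  obtain ⟨i, hi0⟩ : ∃ i, d i ≠ 0 := by
    by_contra! h
    exact hd (funext h)
  obtain ⟨j, hji, hj0⟩ := exists_ne_ne_zero_of_three_dvd_weight (three_dvd_weight hsum) hi0
  refine ⟨i, j, hji.symm, ?_⟩
  rcases (by decide : ∀ t : ZMod 3, t ≠ 0 → t = 1 ∨ t = 2) _ hi0 with hi | hi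
  · have hno2 : ∀ l, d l ≠ 2 := fun l hl => h12 ⟨⟨i, hi⟩, l, hl⟩
    have hj : d j = 1 := (by decide : ∀ t : ZMod 3, t ≠ 0 → t ≠ 2 → t = 1) _ hj0 (hno2 j)
    exact maxWeight_sub_xvec_add_three_le_of_one_one hsum hno2 hji.symm hi hj
  · have hno1 : ∀ l, d l ≠ 1 := fun l hl => h12 ⟨⟨l, hl⟩, i, hi⟩
    have hj : d j = 2 := (by decide : ∀ t : ZMod 3, t ≠ 0 → t ≠ 1 → t = 2) _ hj0 (hno1 j)
    exact maxWeight_sub_xvec_add_three_le_of_two_two hsum hno1 hji.symm hi hj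

end Ternary

namespace GammaVert

variable {m : ℕ}

@[ext]
theorem ext {y z : GammaVert m} (h : y.1 = z.1) : y = z := Subtype.ext h

instance : Fintype (GammaVert m) := by
  unfold GammaVert
  infer_instance

theorem sum_sub_eq_zero (y z : GammaVert m) : ∑ l, (y.1 - z.1) l = 0 := by
  simp [Finset.sum_sub_distrib, y.2, z.2]

def equivTail (k : ℕ) : GammaVert (k + 1) ≃ (Fin k → ZMod 3) where
  toFun y := Fin.tail y.1
  invFun f := ⟨Fin.cons (-∑ l, f l) f, by simp [Fin.sum_cons]⟩
  left_inv y := by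
    have hy : y.1 0 = -∑ l, Fin.tail y.1 l := by
      have := y.2
      rw [Fin.sum_univ_succ] at this
      exact eq_neg_of_add_eq_zero_left this
    ext1
    change Fin.cons (-∑ l, Fin.tail y.1 l) (Fin.tail y.1) = y.1
    rw [← hy, Fin.cons_self_tail]
  right_inv f := Fin.tail_cons _ _

theorem card_add_one (k : ℕ) : Fintype.card (GammaVert (k + 1)) = 3 ^ k := by
  simp [Fintype.card_congr (equivTail k)]

def shift (hm : 3 ∣ m) (c : ZMod 3) (y : GammaVert m) : GammaVert m :=
  ⟨y.1 + fun _ => c, by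
    simp [Finset.sum_add_distrib, y.2, (ZMod.natCast_eq_zero_iff m 3).mpr hm]⟩

@[simp]
theorem shift_val (hm : 3 ∣ m) (c : ZMod 3) (y : GammaVert m) :
    (shift hm c y).1 = y.1 + fun _ => c := rfl

theorem shift_shift (hm : 3 ∣ m) (c c' : ZMod 3) (y : GammaVert m) :
    shift hm c (shift hm c' y) = shift hm (c' + c) y := by
  ext1
  simp only [shift_val, add_assoc]
  rfl

theorem shift_zero (hm : 3 ∣ m) (y : GammaVert m) : shift hm 0 y = y := by
  ext1
  simp only [shift_val]
  exact add_zero y.1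

variable [NeZero m]

abbrev Normalized (m : ℕ) [NeZero m] : Type := {y : GammaVert m // y.1 0 = 0}

def equivNormalizedProd (hm : 3 ∣ m) : GammaVert m ≃ Normalized m × ZMod 3 where
  toFun y := (⟨shift hm (-y.1 0) y, by simp⟩, y.1 0)
  invFun p := shift hm p.2 p.1.1
  left_inv y := by simp [shift_shift, shift_zero]
  right_inv := by
    rintro ⟨⟨y, hy⟩, c⟩
    have h0 : (shift hm c y).1 0 = c := by simp [hy]
    ext1
    · simp only [h0, shift_shift, add_neg_cancel, shift_zero]
    · exact h0

theorem card_normalized (hm : 3 ∣ m) : Fintype.card (Normalized m) = 3 ^ (m - 2) := by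
  obtain ⟨k, rfl⟩ : ∃ k, m = k + 2 := ⟨m - 2, by have := NeZero.ne m; omega⟩
  have h := Fintype.card_congr (equivNormalizedProd hm)
  rw [card_add_one (k + 1), Fintype.card_prod, ZMod.card, pow_succ] at h
  simpa using (Nat.eq_of_mul_eq_mul_right (by norm_num) h).symm

def Antipodal (y z : GammaVert m) : Prop := ∃ c : ZMod 3, c ≠ 0 ∧ y.1 - z.1 = fun _ => c

theorem antipodal_iff (hm : 3 ∣ m) {y z : GammaVert m} :
    Antipodal y z ↔ (equivNormalizedProd hm y).1 = (equivNormalizedProd hm z).1 ∧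
      (equivNormalizedProd hm y).2 ≠ (equivNormalizedProd hm z).2 := by
  have hnorm : (equivNormalizedProd hm y).1 = (equivNormalizedProd hm z).1 ↔
      y.1 - z.1 = fun _ => y.1 0 - z.1 0 := by
    simp only [equivNormalizedProd, Equiv.coe_fn_mk, Subtype.ext_iff, GammaVert.ext_iff,
      shift_val, funext_iff, Pi.add_apply, Pi.sub_apply]
    exact forall_congr' fun l => by constructor <;> intro h <;> linear_combination h
  rw [hnorm]
  constructor
  · rintro ⟨c, hc, h⟩
    have h0 : y.1 0 - z.1 0 = c := congrFun h 0
    exact ⟨h0 ▸ h, sub_ne_zero.mp (h0 ▸ hc)⟩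
  · rintro ⟨h, hne⟩
    exact ⟨_, sub_ne_zero.mpr hne, h⟩

end GammaVert

namespace Gm

open Ternary

variable {m : ℕ}

theorem edist_eq (y z : GammaVert m) : (Gm m).edist y z = (maxWeight (y.1 - z.1) / 3 : ℕ) := by
  refine edist_eq_of_potential (fun y : GammaVert m => maxWeight (y.1 - z.1) / 3) (by simp) ?_ ?_ y
  · rintro u v ⟨i, j, hij, h⟩
    have hsplit : u.1 - z.1 = (v.1 - z.1) + xvec m i j := by rw [← h]; abel
    have := maxWeight_add_le (v.1 - z.1) (xvec m i j)
    rw [← hsplit, maxWeight_xvec hij] at this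
    omega
  · intro u hu
    have hd : u.1 - z.1 ≠ 0 := sub_ne_zero.mpr fun h => hu (GammaVert.ext h)
    obtain ⟨i, j, hij, hstep⟩ :=
      exists_maxWeight_sub_xvec_add_three_le hd (GammaVert.sum_sub_eq_zero u z)
    refine ⟨⟨u.1 - xvec m i j, by simp [Finset.sum_sub_distrib, u.2, sum_xvec hij]⟩,
      ⟨i, j, hij, sub_sub_cancel _ _⟩, ?_⟩
    simp only [sub_right_comm u.1 (xvec m i j) z.1]
    omega

theorem boxProd_top_edist_le_iff {n : ℕ} (u v : GammaVert (3 * n) × Fin 3) :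
    ((Gm (3 * n)).boxProd (⊤ : SimpleGraph (Fin 3))).edist u v ≤ (2 * n : ℕ) ↔
      ¬(GammaVert.Antipodal u.1 v.1 ∧ u.2 ≠ v.2) := by
  have hle := maxWeight_le (u.1.1 - v.1.1)
  have heq := maxWeight_eq_iff (u.1.1 - v.1.1)
  rw [edist_boxProd, edist_top, edist_eq, GammaVert.Antipodal, ← heq]
  split_ifs with h
  · norm_cast
    simp only [h, not_true_eq_false, and_false, not_false_eq_true, iff_true]
    omega
  · norm_cast
    simp only [h, not_false_eq_true, and_true]
    omega

end Gm

/-- Let `n ≥ 2` and `H_{3n} = G_{3n} □ K_3`. Then `H_{3n}^(2n)` is isomorphic to the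
lexicographic product `K_{3^(3n-2)}[K_3 □ K_3]`. -/
theorem power_iso_lexProd (n : ℕ) (hn : 2 ≤ n) :
    Nonempty
      ((((Gm (3 * n)).boxProd (⊤ : SimpleGraph (Fin 3))).power (2 * n)) ≃g
        SimpleGraph.lexProd (⊤ : SimpleGraph (Fin (3 ^ (3 * n - 2))))
          ((⊤ : SimpleGraph (Fin 3)).boxProd (⊤ : SimpleGraph (Fin 3)))) := by
  have : NeZero (3 * n) := ⟨by omega⟩
  have h3 : 3 ∣ 3 * n := dvd_mul_right 3 n
  let eN := GammaVert.equivNormalizedProd h3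
  let eFin := Fintype.equivFinOfCardEq (GammaVert.card_normalized h3)
  refine nonempty_iso_lexProd_top_boxProd_top (eN.trans (eFin.prodCongr (Equiv.refl _)))
    fun u v => ?_
  rw [power_adj_iff, Gm.boxProd_top_edist_le_iff, GammaVert.antipodal_iff h3]
  -- `(eN.trans (eFin.prodCongr _)) x` is definitionally `(eFin (eN x).1, (eN x).2)`
  exact and_congr_right' (not_congr (and_assoc.trans (and_congr_left' eFin.apply_eq_iff_eq.symm)))
end

section
/- For every positive integer n, the list chromatic number of the lexicographic product H = K_{3^{3n−2}}[K_3 □ K_3] of the complete graph on 3^{3n−2} vertices with K_3 □ K_3 satisfies χ_l(H) ≥ (10/9)·3^{3n−1} − 1. -/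
open SimpleGraph

/-! Give the vertex `(v, (a, b))` of `K_M[K_k □ K_k]` the list of colours `c < k K` with
`c ≢ b (mod k)`; every list has `(k - 1) K` colours. In a colouring from these lists, a colour
class `c` inside one copy of `K_k □ K_k` meets each column `b` at most once and avoids column
`c mod k`, so it has at most `k - 1` cells and, as `k² > (k - 1)(k + 1)`, the copy uses at least
`k + 2` colours. Distinct copies are completely joined, so their palettes are disjoint and
`(k + 2) M ≤ k K`. For `k = 3`, `M = 3^(3n-2) = 3q` and `K = 5q - 1` this fails, which gives
lists of size `10q - 2` admitting no colouring. -/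

open Finset

namespace SimpleGraph

theorem choosable_of_card_le {V : Type*} [Fintype V] (G : SimpleGraph V) (L : V → Finset ℕ)
    (hL : ∀ v, Fintype.card V ≤ #(L v)) : G.Choosable L := by
  have hall : ∀ s : Finset V, #s ≤ #(s.biUnion L) := by
    intro s
    rcases s.eq_empty_or_nonempty with rfl | ⟨v, hv⟩
    · simp
    · calc #s ≤ Fintype.card V := card_le_univ s
        _ ≤ #(L v) := hL v
        _ ≤ #(s.biUnion L) := card_le_card (subset_biUnion_of_mem L hv)
  obtain ⟨f, hinj, hf⟩ := (all_card_le_biUnion_card_iff_exists_injective L).1 hall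
  exact ⟨f, hf, fun u v huv he => G.ne_of_adj huv (hinj he)⟩

theorem lt_listChromaticNumber_of_not_choosable {V : Type*} [Fintype V] {G : SimpleGraph V}
    {L : V → Finset ℕ} {t : ℕ} (hL : ∀ v, t ≤ #(L v)) (hG : ¬ G.Choosable L) :
    t < G.listChromaticNumber := by
  refine Nat.lt_of_succ_le <| le_csInf ⟨Fintype.card V, G.choosable_of_card_le⟩ fun s hs => ?_
  by_contra! hst
  exact hG (hs L fun v => (Nat.le_of_lt_succ hst).trans (hL v))

theorem sum_card_image_le_card_image_of_lexProd_top {V W α : Type*} [Fintype V] [Fintype W]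
    [DecidableEq α] (H : SimpleGraph W) (φ : V × W → α)
    (hφ : ∀ x y, ((⊤ : SimpleGraph V).lexProd H).Adj x y → φ x ≠ φ y) :
    ∑ v, #(univ.image fun w => φ (v, w)) ≤ #(univ.image φ) := by
  have hdisj : ((univ : Finset V) : Set V).PairwiseDisjoint
      fun v => univ.image fun w => φ (v, w) := by
    intro v _ v' _ hvv'
    rw [Function.onFun, Finset.disjoint_left]
    simp only [mem_image, mem_univ, true_and]
    rintro _ ⟨w, rfl⟩ ⟨w', hw'⟩
    exact hφ (v', w') (v, w) (Or.inl hvv'.symm) hw'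
  rw [← card_biUnion hdisj]
  refine card_le_card fun c hc => ?_
  simp only [mem_biUnion, mem_image, mem_univ, true_and] at hc ⊢
  obtain ⟨v, w, rfl⟩ := hc
  exact ⟨(v, w), rfl⟩

end SimpleGraph

section RookGraph

variable {k : ℕ} {ψ : Fin k × Fin k → ℕ}

theorem card_filter_eq_le_of_not_modEq_snd (hk : 0 < k)
    (hψ : ∀ p q, ((⊤ : SimpleGraph (Fin k)) □ (⊤ : SimpleGraph (Fin k))).Adj p q → ψ p ≠ ψ q)
    (hcol : ∀ p, ¬ ψ p ≡ p.2 [MOD k]) (c : ℕ) : #{p | ψ p = c} ≤ k - 1 := by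
  set S : Finset (Fin k × Fin k) := {p | ψ p = c}
  have hmaps : Set.MapsTo Prod.snd (S : Set (Fin k × Fin k))
      ((univ.erase ⟨c % k, Nat.mod_lt c hk⟩ : Finset (Fin k)) : Set (Fin k)) := by
    intro p hp
    refine mem_erase.2 ⟨fun hpc => hcol p ?_, mem_univ _⟩
    rw [(mem_filter.1 hp).2, hpc]
    exact (Nat.mod_modEq c k).symm
  have hinj : Set.InjOn Prod.snd (S : Set (Fin k × Fin k)) := by
    intro p hp q hq hpq
    by_contra hne
    have hadj : ((⊤ : SimpleGraph (Fin k)) □ (⊤ : SimpleGraph (Fin k))).Adj p q :=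
      boxProd_adj.2 (Or.inl ⟨fun h => hne (Prod.ext h hpq), hpq⟩)
    exact hψ p q hadj ((mem_filter.1 hp).2.trans (mem_filter.1 hq).2.symm)
  simpa using card_le_card_of_injOn Prod.snd hmaps hinj

theorem add_two_le_card_image_of_not_modEq_snd (hk : 2 ≤ k)
    (hψ : ∀ p q, ((⊤ : SimpleGraph (Fin k)) □ (⊤ : SimpleGraph (Fin k))).Adj p q → ψ p ≠ ψ q)
    (hcol : ∀ p, ¬ ψ p ≡ p.2 [MOD k]) : k + 2 ≤ #(univ.image ψ) := by
  have h := card_le_mul_card_image univ (k - 1) fun c _ =>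
    card_filter_eq_le_of_not_modEq_snd (by omega) hψ hcol c
  obtain ⟨m, rfl⟩ : ∃ m, k = m + 2 := ⟨k - 2, by omega⟩
  simp only [card_univ, Fintype.card_prod, Fintype.card_fin, show m + 2 - 1 = m + 1 by omega] at h
  nlinarith

end RookGraph

theorem card_filter_modEq_range_mul {k : ℕ} (hk : 0 < k) (K r : ℕ) :
    #{c ∈ range (k * K) | c ≡ r [MOD k]} = K := by
  rw [← Nat.count_eq_card_filter_range, Nat.count_modEq_card _ hk, Nat.mul_mod_right,
    Nat.mul_div_cancel_left K hk]
  simp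

def columnAvoidingLists {V : Type*} (k K : ℕ) (x : V × Fin k × Fin k) : Finset ℕ :=
  {c ∈ range (k * K) | ¬ c ≡ x.2.2 [MOD k]}

theorem card_columnAvoidingLists {V : Type*} {k : ℕ} (hk : 0 < k) (K : ℕ)
    (x : V × Fin k × Fin k) : #(columnAvoidingLists k K x) = (k - 1) * K := by
  have h := card_filter_add_card_filter_not (s := range (k * K)) (· ≡ x.2.2 [MOD k])
  rw [card_filter_modEq_range_mul hk, card_range] at h
  rw [columnAvoidingLists, Nat.sub_one_mul]
  omega

theorem not_choosable_columnAvoidingLists {V : Type*} [Fintype V] {k K : ℕ} (hk : 2 ≤ k)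
    (hK : k * K < (k + 2) * Fintype.card V) :
    ¬ ((⊤ : SimpleGraph V).lexProd
      ((⊤ : SimpleGraph (Fin k)) □ (⊤ : SimpleGraph (Fin k)))).Choosable
        (columnAvoidingLists k K) := by
  rintro ⟨φ, hφL, hφ⟩
  have hcopy (v : V) : k + 2 ≤ #(univ.image fun p => φ (v, p)) :=
    add_two_le_card_image_of_not_modEq_snd hk (fun p q hpq => hφ _ _ (Or.inr ⟨rfl, hpq⟩))
      fun p => (mem_filter.1 (hφL (v, p))).2
  have hpalette : #(univ.image φ) ≤ k * K :=
    card_range (k * K) ▸ card_le_card (image_subset_iff.2 fun x _ => (mem_filter.1 (hφL x)).1)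
  have hsum := sum_le_sum fun v (_ : v ∈ univ) => hcopy v
  simp only [sum_const, card_univ, smul_eq_mul] at hsum
  have := SimpleGraph.sum_card_image_le_card_image_of_lexProd_top _ φ hφ
  nlinarith

/-- For every positive integer `n`, the list chromatic number of
`K_{3^(3n-2)}[K_3 □ K_3]` is at least `(10/9)·3^(3n-1) - 1 = 10·3^(3n-3) - 1`. -/
theorem listChromaticNumber_lexProd_lower (n : ℕ) (hn : 1 ≤ n) :
    10 * 3 ^ (3 * n - 3) - 1 ≤
      (SimpleGraph.lexProd (⊤ : SimpleGraph (Fin (3 ^ (3 * n - 2))))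
        ((⊤ : SimpleGraph (Fin 3)).boxProd (⊤ : SimpleGraph (Fin 3)))).listChromaticNumber := by
  set q := 3 ^ (3 * n - 3)
  have hM : 3 ^ (3 * n - 2) = 3 * q := by
    rw [show 3 * n - 2 = 3 * n - 3 + 1 by omega, pow_succ, mul_comm]
  have hq : 0 < q := by positivity
  calc 10 * q - 1 = 2 * (5 * q - 1) + 1 := by omega
    _ ≤ _ := SimpleGraph.lt_listChromaticNumber_of_not_choosable
      (fun x => (card_columnAvoidingLists (by norm_num) (5 * q - 1) x).ge)
      (not_choosable_columnAvoidingLists (k := 3) (by norm_num)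
        (by rw [Fintype.card_fin, hM]; omega))
end

section
/- Let n ≥ 2 be an integer, let H_{3n} = G_{3n} □ K_3, and let P_1, …, P_{3^{3n−2}} be the equivalence classes of the relation ∼ on Γ_{3n} (y ∼ z iff y − z ∈ {0, (1,…,1), (2,…,2)}), and set Q_i = P_i × V(K_3). Then for any vertex x ∈ Q_i and y ∈ Q_j with i ≠ j, the distance in H_{3n} satisfies d_{H_{3n}}(x, y) ≤ 2n. -/
open SimpleGraph

/-! Write `a`, `b` for the numbers of coordinates of `y - z` equal to `1` and `2`; as the
coordinates sum to `0`, `a ≡ b [MOD 3]`. A step along `x_{i,j}` with `(y - z)_i = 1` and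
`(y - z)_j = 2` lowers both counts by one, and one with two equal nonzero coordinates trades two
`1`s for a `2` (or two `2`s for a `1`), so `3 d_{G_m}(y, z) ≤ max (2a + b) (a + 2b)`. For
`m = 3n`, the bounds `a + b ≤ 3n`, `a ≠ 3n`, `b ≠ 3n` and the congruence force
`max (2a + b) (a + 2b) ≤ 6n - 3`, so `d_{G_{3n}} ≤ 2n - 1`, and one more edge of `K_3` fixes the
second coordinate. -/

open Finset

section valCount

variable {ι β : Type*} [Fintype ι] [DecidableEq β]

def valCount (d : ι → β) (c : β) : ℕ := #{l | d l = c}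

lemma valCount_update_add [DecidableEq ι] (d : ι → β) (i : ι) (x c : β) :
    valCount (Function.update d i x) c + (if d i = c then 1 else 0) =
      valCount d c + (if x = c then 1 else 0) := by
  have hsum (e : ι → β) : valCount e c = (if e i = c then 1 else 0) +
      ∑ l ∈ univ \ {i}, if e l = c then 1 else 0 := by
    rw [valCount, card_filter, ← sum_update_of_mem (mem_univ i), Function.update_eq_self]
  rw [hsum, hsum d, Function.update_self]
  simp only [sdiff_singleton_eq_erase, Function.update_apply]
  rw [sum_congr rfl fun l hl => by rw [if_neg (ne_of_mem_erase hl)]]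
  omega

lemma valCount_pos_iff {d : ι → β} {c : β} : 0 < valCount d c ↔ ∃ i, d i = c := by
  simp [valCount, card_pos, filter_nonempty_iff]

lemma one_lt_valCount_iff {d : ι → β} {c : β} :
    1 < valCount d c ↔ ∃ i, d i = c ∧ ∃ j, d j = c ∧ i ≠ j := by
  simp [valCount, one_lt_card]

lemma valCount_add_valCount_le {c c' : β} (h : c ≠ c') (d : ι → β) :
    valCount d c + valCount d c' ≤ Fintype.card ι := by
  classical
  rw [valCount, valCount, ← card_union_of_disjoint
    (disjoint_filter_filter' _ _ fun p hc hc' l hl => h (((hc l hl).symm.trans (hc' l hl))))]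
  exact card_le_univ _

lemma valCount_eq_card_iff (d : ι → β) (c : β) :
    valCount d c = Fintype.card ι ↔ d = fun _ => c := by
  rw [valCount, ← card_univ, card_filter_eq_iff, funext_iff]
  simp

lemma valCount_one_modEq_valCount_two {d : ι → ZMod 3} (hd : ∑ l, d l = 0) :
    valCount d 1 ≡ valCount d 2 [MOD 3] := by
  have hz : ∀ z : ZMod 3, z = (if z = 1 then 1 else 0) + (if z = 2 then 1 else 0) * 2 := by
    decide
  have h12 : (valCount d 1 + valCount d 2 * 2 : ZMod 3) = 0 := by
    rw [← hd, sum_congr rfl fun l _ => hz (d l), sum_add_distrib, ← sum_mul, sum_boole, sum_boole]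
    rfl
  rw [← ZMod.natCast_eq_natCast_iff]
  linear_combination h12 - (valCount d 2 : ZMod 3) * (by decide : (3 : ZMod 3) = 0)

def weight (d : ι → ZMod 3) : ℕ :=
  max (2 * valCount d 1 + valCount d 2) (valCount d 1 + 2 * valCount d 2)

lemma weight_add_three_le_two_mul_card (h3 : 3 ∣ Fintype.card ι)
    {d : ι → ZMod 3} (hd : ∑ l, d l = 0) (h1 : d ≠ fun _ => 1) (h2 : d ≠ fun _ => 2) :
    weight d + 3 ≤ 2 * Fintype.card ι := by
  have hmod := Nat.ModEq.dvd (valCount_one_modEq_valCount_two hd)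
  have hle := valCount_add_valCount_le (by decide : (1 : ZMod 3) ≠ 2) d
  have hne1 := (valCount_eq_card_iff d 1).not.mpr h1
  have hne2 := (valCount_eq_card_iff d 2).not.mpr h2
  unfold weight
  omega

end valCount

lemma GammaVert.sum_val_sub {m : ℕ} (u v : GammaVert m) : ∑ l, (u.1 - v.1) l = 0 := by
  simp [sum_sub_distrib, u.2, v.2]

namespace Gm

variable {m : ℕ} {i j : Fin m}

lemma xvec_eq_single_add_single (hij : i ≠ j) : xvec m i j = Pi.single i 1 + Pi.single j 2 := by
  funext l
  by_cases hli : l = i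
  · subst hli; simp [xvec, hij]
  · by_cases hlj : l = j
    · subst hlj; simp [xvec, hli]
    · simp [xvec, hli, hlj]

lemma sum_xvec (hij : i ≠ j) : ∑ l, xvec m i j l = 0 := by
  simp only [xvec_eq_single_add_single hij, Pi.add_apply, sum_add_distrib, sum_pi_single',
    mem_univ, if_true]
  decide

lemma exists_adj_sub_xvec (u : GammaVert m) (hij : i ≠ j) :
    ∃ u' : GammaVert m, (Gm m).Adj u u' ∧ u'.1 = u.1 - xvec m i j := by
  refine ⟨⟨u.1 - xvec m i j, ?_⟩, ⟨i, j, hij, sub_sub_cancel _ _⟩, rfl⟩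
  simp [sum_sub_distrib, u.2, sum_xvec hij]

lemma sub_xvec_eq_update (d : Fin m → ZMod 3) (hij : i ≠ j) :
    d - xvec m i j = Function.update (Function.update d i (d i - 1)) j (d j + 1) := by
  funext l
  by_cases hli : l = i
  · subst hli; simp [xvec, hij]
  by_cases hlj : l = j
  · subst hlj
    simp only [xvec, hli, if_true, if_false, Pi.sub_apply, Function.update_self]
    rw [sub_eq_add_neg]
    rfl
  · simp [xvec, hli, hlj]

lemma valCount_sub_xvec (d : Fin m → ZMod 3) (hij : i ≠ j) (c : ZMod 3) :
    valCount (d - xvec m i j) c + (if d i = c then 1 else 0) + (if d j = c then 1 else 0) =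
      valCount d c + (if d i - 1 = c then 1 else 0) + (if d j + 1 = c then 1 else 0) := by
  have hj := valCount_update_add (Function.update d i (d i - 1)) j (d j + 1) c
  have hi := valCount_update_add d i (d i - 1) c
  rw [Function.update_of_ne hij.symm] at hj
  rw [sub_xvec_eq_update d hij]
  omega

lemma exists_weight_sub_xvec_add_three_le {d : Fin m → ZMod 3} (hd : ∑ l, d l = 0) (hd0 : d ≠ 0) :
    ∃ i j, i ≠ j ∧ weight (d - xvec m i j) + 3 ≤ weight d := by
  have hmod := Nat.ModEq.dvd (valCount_one_modEq_valCount_two hd)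
  obtain ⟨i, j, hij, hcase⟩ : ∃ i j, i ≠ j ∧ (d i = 1 ∧ d j = 2 ∨
      d i = 1 ∧ d j = 1 ∧ valCount d 2 + 3 ≤ valCount d 1 ∨
      d i = 2 ∧ d j = 2 ∧ valCount d 1 + 3 ≤ valCount d 2) := by
    have hpos : 0 < valCount d 1 + valCount d 2 := by
      obtain ⟨l, hl⟩ := Function.ne_iff.mp hd0
      have hz : ∀ z : ZMod 3, z ≠ 0 → z = 1 ∨ z = 2 := by decide
      rcases hz _ hl with h | h <;> have := valCount_pos_iff.mpr ⟨l, h⟩ <;> omega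
    by_cases ha : valCount d 1 = 0
    · obtain ⟨i, hi, j, hj, hij⟩ := one_lt_valCount_iff.mp (by omega : 1 < valCount d 2)
      exact ⟨i, j, hij, .inr (.inr ⟨hi, hj, by omega⟩)⟩
    by_cases hb : valCount d 2 = 0
    · obtain ⟨i, hi, j, hj, hij⟩ := one_lt_valCount_iff.mp (by omega : 1 < valCount d 1)
      exact ⟨i, j, hij, .inr (.inl ⟨hi, hj, by omega⟩)⟩
    obtain ⟨i, hi⟩ := valCount_pos_iff.mp (Nat.pos_of_ne_zero ha)
    obtain ⟨j, hj⟩ := valCount_pos_iff.mp (Nat.pos_of_ne_zero hb)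
    refine ⟨i, j, ?_, .inl ⟨hi, hj⟩⟩
    rintro rfl
    exact absurd (hi.symm.trans hj) (by decide)
  refine ⟨i, j, hij, ?_⟩
  have h1 := valCount_sub_xvec d hij 1
  have h2 := valCount_sub_xvec d hij 2
  unfold weight
  rcases hcase with ⟨hi, hj⟩ | ⟨hi, hj, hba⟩ | ⟨hi, hj, hab⟩ <;>
    simp +decide only [hi, hj, ↓reduceIte] at h1 h2 <;> omega

theorem exists_walk_three_mul_length_le (u v : GammaVert m) :
    ∃ w : (Gm m).Walk u v, 3 * w.length ≤ weight (u.1 - v.1) := by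
  induction hk : weight (u.1 - v.1) using Nat.strong_induction_on generalizing u with
  | _ k ih =>
  by_cases huv : u = v
  · subst huv
    exact ⟨.nil, by simp⟩
  obtain ⟨i, j, hij, hlt⟩ := exists_weight_sub_xvec_add_three_le (GammaVert.sum_val_sub u v)
    (sub_ne_zero.mpr (Subtype.coe_injective.ne huv))
  obtain ⟨u', hadj, hu'⟩ := exists_adj_sub_xvec u hij
  have hd : u'.1 - v.1 = u.1 - v.1 - xvec m i j := by rw [hu']; abel
  obtain ⟨w, hw⟩ := ih _ (by rw [hd] at *; omega) u' rfl
  exact ⟨.cons hadj w, by rw [Walk.length_cons, hd] at *; omega⟩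

end Gm

lemma SimpleGraph.dist_boxProd_top_le {α β : Type*} {G : SimpleGraph α} {x y : α × β}
    (w : G.Walk x.1 y.1) : (G □ (⊤ : SimpleGraph β)).dist x y ≤ w.length + 1 := by
  have htop : (⊤ : SimpleGraph β).edist x.2 y.2 ≤ 1 := by
    by_cases h : x.2 = y.2
    · simp [h]
    · exact (edist_top_of_ne h).le
  apply ENat.toNat_le_of_le_natCast
  rw [edist_boxProd]
  push_cast
  exact add_le_add (edist_le w) htop

theorem dist_boxProd_le_general (n : ℕ)
    (x y : GammaVert (3 * n) × Fin 3)
    (ha : x.1.1 - y.1.1 ≠ (fun _ => 1 : Fin (3 * n) → ZMod 3))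
    (hb : x.1.1 - y.1.1 ≠ (fun _ => 2 : Fin (3 * n) → ZMod 3)) :
    ((Gm (3 * n)).boxProd (⊤ : SimpleGraph (Fin 3))).dist x y ≤ 2 * n := by
  obtain ⟨w, hw⟩ := Gm.exists_walk_three_mul_length_le x.1 y.1
  have hweight := weight_add_three_le_two_mul_card (by simp) (GammaVert.sum_val_sub x.1 y.1) ha hb
  rw [Fintype.card_fin] at hweight
  calc _ ≤ w.length + 1 := dist_boxProd_top_le w
    _ ≤ 2 * n := by omega

/-- Let `n ≥ 2` and `H_{3n} = G_{3n} □ K_3`. If `x ∈ Q_i` and `y ∈ Q_j` with `i ≠ j`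
(i.e. the `G_{3n}`-components of `x` and `y` lie in distinct equivalence classes of
`∼`, equivalently their difference is none of `0, (1,…,1), (2,…,2)`), then
`d_{H_{3n}}(x, y) ≤ 2n`. -/
theorem dist_boxProd_le (n : ℕ) (hn : 2 ≤ n)
    (x y : GammaVert (3 * n) × Fin 3)
    (h0 : x.1.1 - y.1.1 ≠ 0)
    (ha : x.1.1 - y.1.1 ≠ (fun _ => 1 : Fin (3 * n) → ZMod 3))
    (hb : x.1.1 - y.1.1 ≠ (fun _ => 2 : Fin (3 * n) → ZMod 3)) :
    ((Gm (3 * n)).boxProd (⊤ : SimpleGraph (Fin 3))).dist x y ≤ 2 * n :=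
  dist_boxProd_le_general n x y ha hb
end
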